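/- For every pair of integers k ≥ 3 and ℓ ≥ 1, there exists a positive integer N_2 = N_2(k,ℓ) such that px_{k,ℓ}(K_{n,n}) = 2 for every integer n ≥ N_2. -/

import Mathlib

/-!
Colour the edge `uv` of `K_{n,n}` by the parity of the sum of the indices of `u` and `v`, and give
the vertex with index `a` the phase `2a` (mod 4) on the left and `2a + 1` (mod 4) on the right.
Along a sequence of vertices whose phase goes up by one at each step, consecutive vertices lie on
opposite sides and consecutive edges get different colours, so the sequence is a properly coloured
path. Put the vertices `s₀, …, s_{k-1}` of `S` at slots `p₀ < ⋯ < p_{k-1}` with gaps between 2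
and 5, chosen so that the slot of each `sⱼ` has the residue mod 4 of its phase, and fill every other
position of the `t`-th path with a vertex of the right phase outside `S` that no other path uses;
each phase class has `⌊n/2⌋` vertices or more, so for large `n` there are enough of them. The `ℓ`
paths meet exactly in `S` and share no edge, because no two slots are adjacent.

With a single colour there is no proper `S`-tree: a tree through three vertices has a vertex with
two neighbours.
-/

open SimpleGraph

/-- `T` is an `S`-tree in `G`: a subtree of `G` containing all vertices of `S`. -/
def IsSTree {V : Type*} (G : SimpleGraph V) (S : Set V) (T : G.Subgraph) : Prop :=
  T.coe.IsTree ∧ S ⊆ T.verts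

/-- A family of subgraphs is internally disjoint with respect to `S`:
pairwise edge-disjoint, and pairwise vertex intersection exactly `S`. -/
def InternallyDisjoint {V ι : Type*} {G : SimpleGraph V} (S : Set V)
    (T : ι → G.Subgraph) : Prop :=
  ∀ i j, i ≠ j → (T i).edgeSet ∩ (T j).edgeSet = ∅ ∧ (T i).verts ∩ (T j).verts = S

/-- No two adjacent edges of the subgraph `T` receive the same color under `c`. -/
def ProperSubgraph {V α : Type*} {G : SimpleGraph V} (c : Sym2 V → α) (T : G.Subgraph) : Prop :=
  ∀ u v w, T.Adj u v → T.Adj u w → v ≠ w → c s(u, v) ≠ c s(u, w)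

/-- `c` is a `(k,ℓ)`-proper coloring of `G`: every `k`-subset `S` of vertices is connected by
`ℓ` internally disjoint proper `S`-trees. -/
def IsProperColoring {V α : Type*} (G : SimpleGraph V) (k ℓ : ℕ) (c : Sym2 V → α) : Prop :=
  ∀ S : Finset V, S.card = k →
    ∃ T : Fin ℓ → G.Subgraph,
      (∀ i, IsSTree G (S : Set V) (T i) ∧ ProperSubgraph c (T i)) ∧
      InternallyDisjoint (S : Set V) T

/-- The `(k,ℓ)`-proper index of `G` is at most `m`. -/
def pxLE {V : Type*} (G : SimpleGraph V) (k ℓ m : ℕ) : Prop :=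
  ∃ c : Sym2 V → Fin m, IsProperColoring G k ℓ c

/-- The `(k,ℓ)`-proper index of `G` equals `2`. -/
def pxEq2 {V : Type*} (G : SimpleGraph V) (k ℓ : ℕ) : Prop :=
  pxLE G k ℓ 2 ∧ ¬ pxLE G k ℓ 1

open Finset Function

theorem Function.Injective.extend_eq_or {κ β γ : Type*} {f : κ → β} (hf : Injective f)
    (g : κ → γ) (e' : β → γ) (b : β) :
    (∃ a, f a = b ∧ extend f g e' b = g a) ∨ extend f g e' b = e' b := by
  by_cases h : ∃ a, f a = b
  · obtain ⟨a, rfl⟩ := h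
    exact .inl ⟨a, rfl, hf.extend_apply ..⟩
  · exact .inr (extend_apply' _ _ _ h)

namespace SimpleGraph

variable {V α ι : Type*} {G : SimpleGraph V} {k m : ℕ}

theorem pathGraph_isAcyclic (n : ℕ) : (pathGraph n).IsAcyclic := by
  have isBridge {i j : Fin n} (hij : i.val + 1 = j.val) : (pathGraph n).IsBridge s(i, j) := by
    rintro ⟨p⟩
    obtain ⟨d, -, hfst, hsnd⟩ :=
      p.exists_boundary_dart {x | x.val ≤ i.val} (by simp) (by simp only [Set.mem_ofPred_eq]; omega)
    have hd := d.adj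
    simp only [deleteEdges_adj, pathGraph_adj, Set.mem_singleton_iff] at hd
    simp only [Set.mem_ofPred_eq] at hfst hsnd
    have hi : d.fst = i := Fin.ext (by omega)
    have hj : d.snd = j := Fin.ext (by omega)
    exact hd.2 (by rw [hi, hj])
  rw [isAcyclic_iff_forall_adj_isBridge]
  intro i j hij
  rcases pathGraph_adj.mp hij with h | h
  · exact isBridge h
  · rw [Sym2.eq_swap]
    exact isBridge h

theorem pathGraph_isTree (m : ℕ) : (pathGraph (m + 1)).IsTree :=
  ⟨pathGraph_connected m, pathGraph_isAcyclic _⟩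

namespace Copy

theorem isTree_toSubgraph_pathGraph (f : Copy (pathGraph (m + 1)) G) :
    f.toSubgraph.coe.IsTree :=
  f.isoToSubgraph.isTree_iff.mp (pathGraph_isTree m)

theorem toSubgraph_adj_pathGraph (f : Copy (pathGraph (m + 1)) G) {u v : V} :
    f.toSubgraph.Adj u v ↔ ∃ i j : Fin (m + 1), (i.val + 1 = j.val ∨ j.val + 1 = i.val) ∧
      f i = u ∧ f j = v := by
  simp [Relation.Map, pathGraph_adj]

theorem properSubgraph_toSubgraph_pathGraph (f : Copy (pathGraph (m + 1)) G)
    (c : Sym2 V → α) (hc : ∀ i j l : Fin (m + 1), i.val + 1 = j.val → j.val + 1 = l.val →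
      c s(f i, f j) ≠ c s(f j, f l)) :
    ProperSubgraph c f.toSubgraph := by
  rintro _ _ _ huv huw hvw
  obtain ⟨a, b, hab, rfl, rfl⟩ := f.toSubgraph_adj_pathGraph.mp huv
  obtain ⟨a', b', hab', ha', rfl⟩ := f.toSubgraph_adj_pathGraph.mp huw
  obtain rfl : a = a' := (f.injective ha').symm
  have hbb' : b.val ≠ b'.val := fun h => hvw (by rw [Fin.ext h])
  rcases hab with hab | hab <;> rcases hab' with hab' | hab'
  · omega
  · rw [Sym2.eq_swap (a := f a) (b := f b')]
    exact (hc b' a b hab' hab).symm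
  · rw [Sym2.eq_swap (a := f a) (b := f b)]
    exact hc b a b' hab hab'
  · omega

theorem internallyDisjoint_toSubgraph_pathGraph (f : ι → Copy (pathGraph (m + 1)) G)
    (S : Set V) (hS : ∀ t, S ⊆ Set.range (f t))
    (hprivate : ∀ t t' i i', f t i = f t' i' → f t i ∉ S → t = t')
    (hgap : ∀ t (i j : Fin (m + 1)), i.val + 1 = j.val → f t i ∉ S ∨ f t j ∉ S) :
    InternallyDisjoint S fun t => (f t).toSubgraph := by
  intro t t' htt'
  have hverts : (f t).toSubgraph.verts ∩ (f t').toSubgraph.verts = S := by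
    refine Set.Subset.antisymm ?_ (Set.subset_inter (by simpa using hS t) (by simpa using hS t'))
    rintro _ ⟨⟨i, -, rfl⟩, ⟨i', -, h⟩⟩
    by_contra hv
    exact htt' (hprivate t t' i i' h.symm hv)
  refine ⟨Set.eq_empty_of_forall_notMem fun e ⟨he, he'⟩ => ?_, hverts⟩
  induction e using Sym2.ind with
  | _ u v =>
    have hu : u ∈ S := hverts ▸ ⟨(f t).toSubgraph.edge_vert he, (f t').toSubgraph.edge_vert he'⟩
    have hv : v ∈ S :=
      hverts ▸ ⟨(f t).toSubgraph.edge_vert (Subgraph.adj_symm _ he),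
        (f t').toSubgraph.edge_vert (Subgraph.adj_symm _ he')⟩
    obtain ⟨i, j, hij, rfl, rfl⟩ := (f t).toSubgraph_adj_pathGraph.mp he
    rcases hij with hij | hij
    · exact (hgap t i j hij).elim (· hu) (· hv)
    · exact (hgap t j i hij).elim (· hv) (· hu)

end Copy

section Interleave

/- `extend σ s (conn t)` is the `t`-th path: `s j` sits at slot `σ j`, and the connector `conn t i`
at every other position `i`. -/
variable {s : Fin k ↪ V} {σ : Fin k ↪ Fin (m + 1)} {conn : ι → Fin (m + 1) → V}

theorem exists_eq_of_extend_mem_range (hconn_s : ∀ t i, conn t i ∉ Set.range s) {t i}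
    (h : extend σ s (conn t) i ∈ Set.range s) : ∃ j, σ j = i := by
  rcases σ.injective.extend_eq_or s (conn t) i with ⟨j, hj, -⟩ | hi
  · exact ⟨j, hj⟩
  · exact absurd (hi ▸ h) (hconn_s t i)

theorem eq_of_extend_eq_extend (hconn : Injective (uncurry conn))
    (hconn_s : ∀ t i, conn t i ∉ Set.range s) {t t' i i'}
    (h : extend σ s (conn t) i = extend σ s (conn t') i') :
    i = i' ∧ (t = t' ∨ extend σ s (conn t) i ∈ Set.range s) := by
  rcases σ.injective.extend_eq_or s (conn t) i with ⟨j, rfl, hj⟩ | hi <;>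
    rcases σ.injective.extend_eq_or s (conn t') i' with ⟨j', rfl, hj'⟩ | hi'
  · obtain rfl := s.injective (hj.symm.trans (h.trans hj'))
    exact ⟨rfl, .inr ⟨j, hj.symm⟩⟩
  · exact absurd ⟨j, by rw [← hj, h, hi']⟩ (hconn_s t' i')
  · exact absurd ⟨j', by rw [← hj', ← h, hi]⟩ (hconn_s t i)
  · obtain ⟨rfl, rfl⟩ := Prod.ext_iff.mp (@hconn (t, i) (t', i') (hi.symm.trans (h.trans hi')))
    exact ⟨rfl, .inl rfl⟩

theorem exists_internallyDisjoint_of_interleave (c : Sym2 V → α)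
    (hσ : ∀ j j', (σ j).val + 1 ≠ σ j') (hconn : Injective (uncurry conn))
    (hconn_s : ∀ t i, conn t i ∉ Set.range s)
    (hadj : ∀ t (i j : Fin (m + 1)), i.val + 1 = j.val →
      G.Adj (extend σ s (conn t) i) (extend σ s (conn t) j))
    (hcol : ∀ t (i j l : Fin (m + 1)), i.val + 1 = j.val → j.val + 1 = l.val →
      c s(extend σ s (conn t) i, extend σ s (conn t) j) ≠
        c s(extend σ s (conn t) j, extend σ s (conn t) l)) :
    ∃ T : ι → G.Subgraph, (∀ t, IsSTree G (Set.range s) (T t) ∧ ProperSubgraph c (T t)) ∧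
      InternallyDisjoint (Set.range s) T := by
  let f : ι → Copy (pathGraph (m + 1)) G := fun t =>
    ⟨⟨extend σ s (conn t), fun {i j} h => (pathGraph_adj.mp h).elim (hadj t i j)
      fun h => (hadj t j i h).symm⟩, fun i i' h => (eq_of_extend_eq_extend hconn hconn_s h).1⟩
  have hS : ∀ t, Set.range s ⊆ Set.range (f t) := by
    rintro t _ ⟨j, rfl⟩
    exact ⟨σ j, σ.injective.extend_apply ..⟩
  refine ⟨fun t => (f t).toSubgraph, fun t => ⟨⟨(f t).isTree_toSubgraph_pathGraph, ?_⟩,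
    (f t).properSubgraph_toSubgraph_pathGraph c (hcol t)⟩,
    Copy.internallyDisjoint_toSubgraph_pathGraph f _ hS ?_ ?_⟩
  · simpa using hS t
  · exact fun t t' i i' h hi => (eq_of_extend_eq_extend hconn hconn_s h).2.resolve_right hi
  · intro t i i' hii'
    by_contra! h
    obtain ⟨j, rfl⟩ := exists_eq_of_extend_mem_range hconn_s h.1
    obtain ⟨j', rfl⟩ := exists_eq_of_extend_mem_range hconn_s h.2
    exact hσ j j' hii'

end Interleave

end SimpleGraph

theorem exists_slots_mod_four (φ : ℕ → ℕ) : ∃ p : ℕ → ℕ, StrictMono p ∧ (∀ j j', p j + 1 ≠ p j') ∧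
    (∀ j, p j ≤ 5 * j) ∧ ∀ j, (φ 0 + p j) % 4 = φ j % 4 := by
  -- the next slot is the first position at least two further on with the prescribed residue
  let p : ℕ → ℕ := fun j =>
    Nat.rec 0 (fun j pj => pj + 2 + (φ (j + 1) + 4 - (φ 0 + pj + 2) % 4) % 4) j
  have hp : ∀ j, p (j + 1) = p j + 2 + (φ (j + 1) + 4 - (φ 0 + p j + 2) % 4) % 4 := fun j => rfl
  have hmono : StrictMono p := strictMono_nat_of_lt_succ fun j => by rw [hp]; omega
  refine ⟨p, hmono, fun j j' h => ?_, fun j => ?_, fun j => ?_⟩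
  · have h1 : j < j' := hmono.lt_iff_lt.mp (by omega)
    have h2 : j' < j + 1 := hmono.lt_iff_lt.mp (by rw [hp]; omega)
    omega
  · induction j with
    | zero => rfl
    | succ j ih => rw [hp]; omega
  · cases j with
    | zero => rfl
    | succ j => rw [hp]; omega

section CompleteBipartite

variable {n : ℕ}

def bipartitePhase : Fin n ⊕ Fin n → ℕ
  | .inl a => 2 * a % 4
  | .inr a => (2 * a + 1) % 4

def parityColoring : Sym2 (Fin n ⊕ Fin n) → ZMod 2 :=
  Sym2.lift ⟨fun u v => (Sum.elim Fin.val Fin.val u + Sum.elim Fin.val Fin.val v : ℕ),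
    fun _ _ => by simp only [add_comm]⟩

theorem bipartitePhase_lt (v : Fin n ⊕ Fin n) : bipartitePhase v < 4 := by
  cases v <;> simp only [bipartitePhase] <;> omega

theorem completeBipartiteGraph_adj_of_phase {u v : Fin n ⊕ Fin n}
    (h : bipartitePhase v = (bipartitePhase u + 1) % 4) :
    (completeBipartiteGraph (Fin n) (Fin n)).Adj u v := by
  cases u <;> cases v <;> simp only [bipartitePhase] at h <;>
    first | omega | simp

theorem parityColoring_ne_of_phase {u v w : Fin n ⊕ Fin n}
    (huv : bipartitePhase v = (bipartitePhase u + 1) % 4)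
    (hvw : bipartitePhase w = (bipartitePhase v + 1) % 4) :
    parityColoring s(u, v) ≠ parityColoring s(v, w) := by
  cases u <;> cases v <;> cases w <;> simp only [bipartitePhase] at huv hvw <;>
    simp only [parityColoring, Sym2.lift_mk, Sum.elim_inl, Sum.elim_inr, ne_eq,
      ZMod.natCast_eq_natCast_iff'] <;> omega

theorem le_card_bipartitePhase (x : ℕ) :
    n / 2 ≤ #{v : Fin n ⊕ Fin n | bipartitePhase v = x % 4} := by
  let f : Fin (n / 2) → Fin n ⊕ Fin n := fun r =>
    if x % 2 = 0 then .inl ⟨2 * r + x % 4 / 2, by omega⟩ else .inr ⟨2 * r + x % 4 / 2, by omega⟩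
  have hf : ∀ r, bipartitePhase (f r) = x % 4 := fun r => by
    simp only [f]
    split_ifs <;> simp only [bipartitePhase] <;> omega
  simpa using Finset.card_le_card_of_injOn f (s := univ) (fun r _ => by simpa using hf r)
    (fun r _ r' _ h => by simp only [f] at h; split_ifs at h <;>
      simp only [Sum.inl.injEq, Sum.inr.injEq, Fin.mk.injEq] at h <;> omega)

theorem exists_embedding_bipartitePhase (S : Finset (Fin n ⊕ Fin n)) {ι : Type*} [Fintype ι]
    (h : Fintype.card ι + #S ≤ n / 2) (x : ℕ) :
    ∃ e : ι ↪ Fin n ⊕ Fin n, ∀ r, e r ∉ S ∧ bipartitePhase (e r) = x % 4 := by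
  have hA : Fintype.card ι ≤ #(({v | bipartitePhase v = x % 4} : Finset _) \ S) := by
    have := le_card_bipartitePhase (n := n) x
    have := le_card_sdiff S {v | bipartitePhase v = x % 4}
    omega
  rw [← Fintype.card_coe] at hA
  obtain ⟨e⟩ := Function.Embedding.nonempty_of_card_le hA
  refine ⟨e.trans (.subtype _), fun r => ?_⟩
  have := (e r).2
  simp only [mem_sdiff, mem_filter, mem_univ, true_and] at this
  exact ⟨this.2, this.1⟩

theorem exists_connectors_bipartitePhase (S : Finset (Fin n ⊕ Fin n)) {ℓ L : ℕ}
    (h : ℓ * L + #S ≤ n / 2) (o : ℕ) :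
    ∃ conn : Fin ℓ → Fin L → Fin n ⊕ Fin n, Injective (uncurry conn) ∧
      ∀ t i, conn t i ∉ S ∧ bipartitePhase (conn t i) = (o + i) % 4 := by
  choose e he using exists_embedding_bipartitePhase S (ι := Fin ℓ × Fin L) (by simpa using h)
  refine ⟨fun t i => e ((o + i) % 4) (t, i), ?_,
    fun t i => ⟨(he _ _).1, by rw [(he _ _).2, Nat.mod_mod]⟩⟩
  rintro ⟨t, i⟩ ⟨t', i'⟩ h
  have hx : (o + i) % 4 = (o + i') % 4 := by
    simpa only [uncurry_apply_pair, (he _ _).2, Nat.mod_mod] using congrArg bipartitePhase h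
  simp only [uncurry_apply_pair, hx] at h
  exact (e _).injective h

theorem exists_internallyDisjoint_parityColoring {k ℓ : ℕ} [NeZero k]
    (s : Fin k ↪ Fin n ⊕ Fin n) (hn : ℓ * (5 * k) + k ≤ n / 2) :
    ∃ T : Fin ℓ → (completeBipartiteGraph (Fin n) (Fin n)).Subgraph,
      (∀ t, IsSTree _ (Set.range s) (T t) ∧ ProperSubgraph parityColoring (T t)) ∧
      InternallyDisjoint (Set.range s) T := by
  let φ : ℕ → ℕ := fun j => if h : j < k then bipartitePhase (s ⟨j, h⟩) else 0
  have hφ : ∀ j : Fin k, φ j = bipartitePhase (s j) := fun j => dif_pos j.isLt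
  obtain ⟨p, hp_mono, hp_gap, hp_le, hp_phase⟩ := exists_slots_mod_four φ
  set o := φ 0
  set m := p (k - 1)
  have hp_lt : ∀ j : Fin k, p j < m + 1 := fun j =>
    Nat.lt_succ_of_le (hp_mono.monotone (Nat.le_sub_one_of_lt j.isLt))
  let σ : Fin k ↪ Fin (m + 1) :=
    ⟨fun j => ⟨p j, hp_lt j⟩, fun j j' h => Fin.ext (hp_mono.injective (Fin.mk.inj h))⟩
  have hσ : ∀ j, bipartitePhase (s j) = (o + σ j) % 4 := fun j => by
    have := hp_phase j
    rw [hφ, Nat.mod_eq_of_lt (bipartitePhase_lt _)] at this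
    exact this.symm
  have hcard : ℓ * (m + 1) + #(univ.map s) ≤ n / 2 := by
    have : ℓ * (m + 1) ≤ ℓ * (5 * k) :=
      Nat.mul_le_mul_left ℓ (by have := hp_le (k - 1); have := NeZero.one_le (n := k); omega)
    simpa using (Nat.add_le_add_right this k).trans hn
  obtain ⟨conn, hconn, hconn_spec⟩ := exists_connectors_bipartitePhase (univ.map s) hcard o
  have hphase : ∀ t i, bipartitePhase (extend σ s (conn t) i) = (o + i) % 4 := fun t i => by
    rcases σ.injective.extend_eq_or s (conn t) i with ⟨j, rfl, h⟩ | h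
    · rw [h, hσ]
    · rw [h, (hconn_spec t i).2]
  refine exists_internallyDisjoint_of_interleave (σ := σ) _ (fun j j' => hp_gap j j') hconn
    (fun t i => by simpa using (hconn_spec t i).1) (fun t i j hij => ?_) (fun t i j l hij hjl => ?_)
  · exact completeBipartiteGraph_adj_of_phase (by rw [hphase, hphase]; omega)
  · exact parityColoring_ne_of_phase (by rw [hphase, hphase]; omega) (by rw [hphase, hphase]; omega)

theorem isProperColoring_parityColoring {k ℓ : ℕ} (hk : 1 ≤ k) (hn : ℓ * (5 * k) + k ≤ n / 2) :
    IsProperColoring (completeBipartiteGraph (Fin n) (Fin n)) k ℓ parityColoring := by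
  intro S hS
  have : NeZero k := ⟨by omega⟩
  let e : S ≃ Fin k := Fintype.equivFinOfCardEq (by simpa using hS)
  let s : Fin k ↪ Fin n ⊕ Fin n := e.symm.toEmbedding.trans (.subtype (· ∈ S))
  have hs : Set.range s = S := by
    ext v
    refine ⟨?_, fun hv => ?_⟩
    · rintro ⟨j, rfl⟩
      exact Subtype.prop _
    · exact ⟨e ⟨v, hv⟩, by simp [s]⟩
  simpa [hs] using exists_internallyDisjoint_parityColoring s hn

end CompleteBipartite

namespace SimpleGraph

variable {V : Type*} {G : SimpleGraph V}

theorem Preconnected.exists_adj_adj_ne_of_not_adj (hG : G.Preconnected) {a b : V} (hab : a ≠ b)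
    (hnadj : ¬ G.Adj a b) : ∃ u v w, G.Adj u v ∧ G.Adj u w ∧ v ≠ w := by
  classical
  obtain ⟨p, hp⟩ := (hG a b).some.toPath
  cases p with
  | nil => exact absurd rfl hab
  | cons h r =>
    cases r with
    | nil => exact absurd h hnadj
    | cons h' r' =>
      rw [Walk.cons_isPath_iff] at hp
      exact ⟨_, a, _, h.symm, h', fun he => hp.2 (by simp [he])⟩

theorem Preconnected.exists_adj_adj_ne (hG : G.Preconnected) {x y z : V} (hxy : x ≠ y)
    (hxz : x ≠ z) (hyz : y ≠ z) : ∃ u v w, G.Adj u v ∧ G.Adj u w ∧ v ≠ w := by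
  by_cases h : G.Adj x y
  · by_cases h' : G.Adj x z
    · exact ⟨x, y, z, h, h', hyz⟩
    · exact hG.exists_adj_adj_ne_of_not_adj hxz h'
  · exact hG.exists_adj_adj_ne_of_not_adj hxy h

theorem not_pxLE_one [Fintype V] {k ℓ : ℕ} (hk : 3 ≤ k) (hl : 1 ≤ ℓ) (hV : k ≤ Fintype.card V) :
    ¬ pxLE G k ℓ 1 := by
  classical
  rintro ⟨c, hc⟩
  obtain ⟨S, -, hS⟩ := exists_subset_card_eq (s := univ) (by simpa using hV)
  obtain ⟨T, hT, -⟩ := hc S hS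
  obtain ⟨⟨htree, hST⟩, hproper⟩ := hT ⟨0, hl⟩
  obtain ⟨x, hx, y, hy, z, hz, hxy, hxz, hyz⟩ := two_lt_card.mp (hS ▸ hk)
  obtain ⟨u, v, w, huv, huw, hvw⟩ := htree.connected.preconnected.exists_adj_adj_ne
    (x := ⟨x, hST hx⟩) (y := ⟨y, hST hy⟩) (z := ⟨z, hST hz⟩)
    (by simpa using hxy) (by simpa using hxz) (by simpa using hyz)
  exact hproper u v w huv huw (Subtype.coe_ne_coe.mpr hvw) (Subsingleton.elim _ _)

end SimpleGraph

/-- For every pair of integers `k ≥ 3` and `ℓ ≥ 1` there is a positive integer `N₂ = N₂(k,ℓ)`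
such that `px_{k,ℓ}(K_{n,n}) = 2` for every `n ≥ N₂`. -/
theorem px_k_ell_complete_bipartite (k ℓ : ℕ) (hk : 3 ≤ k) (hl : 1 ≤ ℓ) :
    ∃ N₂ : ℕ, 0 < N₂ ∧ ∀ n, N₂ ≤ n →
      pxEq2 (completeBipartiteGraph (Fin n) (Fin n)) k ℓ := by
  refine ⟨2 * (ℓ * (5 * k) + k), by omega, fun n hn => ⟨?_, ?_⟩⟩
  -- `ZMod 2` is by definition `Fin 2`
  · exact ⟨parityColoring, isProperColoring_parityColoring (by omega) (by omega)⟩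
  · exact not_pxLE_one hk hl (by simp only [Fintype.card_sum, Fintype.card_fin]; omega)
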